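/- arXiv:1501.00136 — 6 statements merged into one kernel-verified Lean document; each statement's English description precedes it below -/
import Mathlib

section
/- Let u > 1 be real and let ξ = ξ(u) be the unique nonzero real solution of e^ξ = 1 + u·ξ. Then log u < ξ ≤ 2·log u. -/
theorem stmt_1 (u ξ : ℝ) (hu : 1 < u) (hξ : ξ ≠ 0)
    (heq : Real.exp ξ = 1 + u * ξ) :
    Real.log u < ξ ∧ ξ ≤ 2 * Real.log u := by
  have hupos : 0 < u := lt_trans one_pos hu
  -- ξ > 0
  have hξpos : 0 < ξ := by
    rcases lt_or_gt_of_ne hξ with hneg | hpos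
    · exfalso
      have h1 : ξ + 1 < Real.exp ξ := Real.add_one_lt_exp hξ
      have h2 : u * ξ < 1 * ξ := by
        exact (mul_lt_mul_right_of_neg hneg).mpr hu
      nlinarith
    · exact hpos
  constructor
  · -- log u < ξ : show u < exp ξ
    have h1 : (-ξ) + 1 < Real.exp (-ξ) := Real.add_one_lt_exp (neg_ne_zero.mpr hξ)
    have h2 : Real.exp (-ξ) * Real.exp ξ = 1 := by
      rw [← Real.exp_add]; simp
    have hexp : 0 < Real.exp ξ := Real.exp_pos ξ
    have h3 : u < Real.exp ξ := by nlinarith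
    rwa [Real.log_lt_iff_lt_exp hupos]
  · -- ξ ≤ 2 log u
    have hsinh : ξ / 2 < Real.sinh (ξ / 2) := Real.self_lt_sinh_iff.mpr (by linarith)
    have hs : Real.sinh (ξ / 2) = (Real.exp (ξ / 2) - Real.exp (-(ξ / 2))) / 2 :=
      Real.sinh_eq _
    have hmul : Real.exp (ξ / 2) * Real.exp (ξ / 2) = Real.exp ξ := by
      rw [← Real.exp_add]; ring_nf
    have hinv : Real.exp (-(ξ / 2)) * Real.exp (ξ / 2) = 1 := by
      rw [← Real.exp_add]; simp
    have hexp2 : 0 < Real.exp (ξ / 2) := Real.exp_pos _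
    have h3 : Real.exp (ξ / 2) < u := by nlinarith
    have h4 : ξ / 2 < Real.log u := by
      rw [← Real.log_exp (ξ / 2)]
      exact Real.log_lt_log hexp2 h3
    linarith
end

section
/- Let r ≥ 1 be an integer, u > 1 real, and let x > 1 satisfy Σ_{j=1}^{r} x^j = u·r. Then u^{1/r} ≤ x ≤ u^{2/(r+1)}. -/
/-!
The saddle-point equation says that `u` is the arithmetic mean of `x, x², …, xʳ`. Since `x > 1`,
this mean is at most the largest term `xʳ`, which gives the lower bound; by AM-GM it is at least
the geometric mean `x^((r+1)/2)`, which gives the upper bound.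
-/

open Finset Real

lemma sum_Icc_pow_le_mul_pow {x : ℝ} (hx : 1 ≤ x) (r : ℕ) :
    ∑ j ∈ Icc 1 r, x ^ j ≤ r * x ^ r := by
  have h := sum_le_card_nsmul (Icc 1 r) (x ^ ·) (x ^ r) fun j hj =>
    pow_le_pow_right₀ hx (mem_Icc.mp hj).2
  simpa [nsmul_eq_mul] using h

lemma sum_Icc_natCast (r : ℕ) : ∑ j ∈ Icc 1 r, (j : ℝ) = r * (r + 1) / 2 := by
  induction r with
  | zero => simp
  | succ r ih =>
    rw [sum_Icc_succ_top (by omega), ih]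
    push_cast
    ring

lemma prod_Icc_pow_rpow_inv {x : ℝ} (hx : 0 ≤ x) {r : ℕ} (hr : 0 < r) :
    (∏ j ∈ Icc 1 r, x ^ j) ^ (r : ℝ)⁻¹ = x ^ (((r : ℝ) + 1) / 2) := by
  have hr' : (r : ℝ) ≠ 0 := by positivity
  rw [prod_pow_eq_pow_sum, ← rpow_natCast, ← rpow_mul hx]
  push_cast
  rw [sum_Icc_natCast]
  congr 1
  field_simp

lemma rpow_add_one_div_two_le_sum_Icc_pow_div {x : ℝ} (hx : 0 ≤ x) {r : ℕ} (hr : 0 < r) :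
    x ^ (((r : ℝ) + 1) / 2) ≤ (∑ j ∈ Icc 1 r, x ^ j) / r := by
  have h := geom_mean_le_arith_mean (Icc 1 r) (fun _ => 1) (x ^ ·) (fun _ _ => zero_le_one)
    (by simpa using hr) fun j _ => pow_nonneg hx j
  simpa [prod_Icc_pow_rpow_inv hx hr] using h

theorem stmt_5 (r : ℕ) (hr : 1 ≤ r) (u x : ℝ) (hu : 1 < u) (hx : 1 < x)
    (hsaddle : ∑ j ∈ Finset.Icc 1 r, x ^ j = u * r) :
    u ^ ((1 : ℝ) / r) ≤ x ∧ x ≤ u ^ ((2 : ℝ) / (r + 1)) := by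
  have hr_pos : (0 : ℝ) < r := by positivity
  have hmean : (∑ j ∈ Icc 1 r, x ^ j) / r = u := by
    rw [hsaddle, mul_div_cancel_right₀ u hr_pos.ne']
  constructor
  · rw [one_div, rpow_inv_le_iff_of_pos (by linarith) (by linarith) hr_pos, rpow_natCast, ← hmean,
      div_le_iff₀ hr_pos, mul_comm]
    exact sum_Icc_pow_le_mul_pow hx.le r
  · rw [← inv_div, le_rpow_inv_iff_of_pos (by linarith) (by linarith) (by positivity), ← hmean]
    exact rpow_add_one_div_two_le_sum_Icc_pow_div (by linarith) hr
end

section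
/- Let r ≥ 1 be an integer, u > 1 real, and x > 1 the solution of Σ_{j=1}^r x^j = u·r. If r ≤ log u, then x^r > (1 − e^{−1})·r·u and x^r ≤ 1 + r·u. -/
/-!
Telescoping the geometric sum gives `x ^ r - 1 = u r (1 - 1/x)`, so the lower bound reduces to
`x ≥ e`. That holds because `u r = ∑ x ^ j ≤ r x ^ r` forces `x ^ r ≥ u ≥ e ^ r`. The upper bound is
just `x ^ r ≤ ∑ x ^ j = u r`.
-/

open Finset Real

section OrderedSemiring

variable {R : Type*} [Semiring R] [PartialOrder R] [IsOrderedRing R]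

lemma pow_le_sum_Icc_one_pow {x : R} (hx : 0 ≤ x) {r : ℕ} (hr : 1 ≤ r) :
    x ^ r ≤ ∑ j ∈ Icc 1 r, x ^ j :=
  single_le_sum (fun j _ => pow_nonneg hx j) (mem_Icc.mpr ⟨hr, le_rfl⟩)

lemma sum_Icc_one_pow_le {x : R} (hx : 1 ≤ x) (r : ℕ) :
    ∑ j ∈ Icc 1 r, x ^ j ≤ r * x ^ r := by
  calc ∑ j ∈ Icc 1 r, x ^ j ≤ ∑ _j ∈ Icc 1 r, x ^ r :=
        sum_le_sum fun j hj => pow_le_pow_right₀ hx (mem_Icc.mp hj).2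
    _ = r * x ^ r := by simp

end OrderedSemiring

lemma sum_Icc_one_pow_mul_sub_one {R : Type*} [CommRing R] (x : R) (r : ℕ) :
    (∑ j ∈ Icc 1 r, x ^ j) * (x - 1) = x * (x ^ r - 1) := by
  rw [← Ico_add_one_right_eq_Icc, geom_sum_Ico_mul x (by omega)]
  ring

lemma exp_one_le_of_exp_le_pow {x : ℝ} (hx : 0 ≤ x) {r : ℕ} (hr : r ≠ 0)
    (h : exp r ≤ x ^ r) : exp 1 ≤ x :=
  le_of_pow_le_pow_left₀ hr hx (by rwa [← exp_nat_mul, mul_one])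

theorem stmt_9 (r : ℕ) (hr : 1 ≤ r) (u x : ℝ) (hu : 1 < u) (hx : 1 < x)
    (hsaddle : ∑ j ∈ Finset.Icc 1 r, x ^ j = u * r)
    (hrlog : (r : ℝ) ≤ Real.log u) :
    (1 - Real.exp (-1)) * r * u < x ^ r ∧ x ^ r ≤ 1 + r * u := by
  have hx0 : 0 < x := one_pos.trans hx
  have hr0 : (0 : ℝ) < r := by exact_mod_cast hr
  have hu_le : u ≤ x ^ r := by
    have := hsaddle ▸ sum_Icc_one_pow_le hx.le r
    nlinarith
  have hex : exp 1 ≤ x := exp_one_le_of_exp_le_pow hx0.le (by omega)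
    ((exp_le_exp.mpr hrlog).trans ((exp_log (one_pos.trans hu)).le.trans hu_le))
  have hpow : x ^ r - 1 = (1 - x⁻¹) * r * u := by
    have := hsaddle ▸ sum_Icc_one_pow_mul_sub_one x r
    field_simp
    linarith
  constructor
  · calc (1 - exp (-1)) * r * u ≤ (1 - x⁻¹) * r * u := by
          gcongr
          rw [exp_neg]
          exact inv_anti₀ (exp_pos 1) hex
      _ < x ^ r := by linarith
  · linarith [hsaddle ▸ pow_le_sum_Icc_one_pow hx0.le hr]
end

section
/- The probability that a uniformly random permutation of n elements has all cycle lengths at most r equals exp(Σ_{j=1}^r 1/j) · P(Σ_{j=1}^r j·Z_j = n), where Z_1, …, Z_r are independent Poisson random variables with E[Z_j] = 1/j. -/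
open MeasureTheory ProbabilityTheory
open scoped NNReal Classical

open Finset Nat

/-!
Cauchy's formula: if `∑ j * s_j = n`, exactly `n! / ∏ j ^ s_j * s_j!` permutations of an
`n`-set have `s_j` cycles of length `j` for every `j`, the denominator being the order of the
centralizer of any of them. Summing over the `s` supported on `j ≤ r`, the proportion of
permutations with all cycles of length at most `r` is `∑_s ∏_j 1 / (j ^ s_j * s_j!)`. On the
other side, independence splits `P(∑ j Z_j = n)` into the same sum of products of Poisson
weights `e^(-1/j) (1/j)^s_j / s_j!`, which is `e^(-∑ 1/j)` times it.
-/

namespace Multiset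

theorem filter_two_le_add_replicate_count_one {P : Multiset ℕ} (hP : ∀ k ∈ P, 0 < k) :
    P.filter (2 ≤ ·) + replicate (P.count 1) 1 = P := by
  conv_rhs => rw [← filter_add_not (2 ≤ ·) P]
  rw [← filter_eq']
  congr 1
  exact filter_congr fun k hk => by have := hP k hk; omega

theorem eq_of_filter_two_le_eq {P Q : Multiset ℕ} (hP : ∀ k ∈ P, 0 < k) (hQ : ∀ k ∈ Q, 0 < k)
    (hsum : P.sum = Q.sum) (hfilter : P.filter (2 ≤ ·) = Q.filter (2 ≤ ·)) : P = Q := by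
  rw [← filter_two_le_add_replicate_count_one hP, ← filter_two_le_add_replicate_count_one hQ,
    sum_add, sum_add, hfilter] at hsum
  simp only [sum_replicate, smul_eq_mul, mul_one, Nat.add_left_cancel_iff] at hsum
  rw [← filter_two_le_add_replicate_count_one hP, ← filter_two_le_add_replicate_count_one hQ,
    hfilter, hsum]

theorem prod_factorial_count_eq_factorial_count_one_mul {P : Multiset ℕ}
    (hP : ∀ k ∈ P, 0 < k) :
    ∏ k ∈ P.toFinset, (P.count k)! =
      (P.count 1)! * ∏ k ∈ (P.filter (2 ≤ ·)).toFinset, ((P.filter (2 ≤ ·)).count k)! := by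
  have hcount : ∀ k ∈ (P.filter (2 ≤ ·)).toFinset, (P.filter (2 ≤ ·)).count k = P.count k :=
    fun k hk => count_filter_of_pos (of_mem_filter (mem_toFinset.1 hk))
  rw [Finset.prod_congr rfl fun k hk => congrArg factorial (hcount k hk),
    ← Finset.prod_insert (f := fun k => (P.count k)!) (by simp)]
  refine Finset.prod_subset (fun k hk => ?_) fun k _ hk => ?_
  · have := hP k (mem_toFinset.1 hk)
    rcases (by omega : k = 1 ∨ 2 ≤ k) with rfl | h2
    · exact Finset.mem_insert_self _ _
    · exact Finset.mem_insert_of_mem (mem_toFinset.2 (mem_filter.2 ⟨mem_toFinset.1 hk, h2⟩))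
  · rw [count_eq_zero.2 (mt mem_toFinset.2 hk), factorial_zero]

end Multiset

/-- Index `i : Fin r` stands for the part (cycle length) `i + 1`: `s i` is the number of parts
equal to `i + 1`. -/
def countVectors (r n : ℕ) : Finset (Fin r → ℕ) :=
  {s ∈ Fintype.piFinset fun _ => range (n + 1) | ∑ i : Fin r, ((i : ℕ) + 1) * s i = n}

theorem mem_countVectors {r n : ℕ} {s : Fin r → ℕ} :
    s ∈ countVectors r n ↔ ∑ i : Fin r, ((i : ℕ) + 1) * s i = n := by
  refine ⟨fun h => (mem_filter.1 h).2, fun h => mem_filter.2 ⟨?_, h⟩⟩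
  refine Fintype.mem_piFinset.2 fun i => mem_range_succ_iff.2 ?_
  calc s i ≤ ((i : ℕ) + 1) * s i := Nat.le_mul_of_pos_left _ i.succ_pos
    _ ≤ n := h ▸ single_le_sum (f := fun j : Fin r => ((j : ℕ) + 1) * s j)
        (fun _ _ => Nat.zero_le _) (mem_univ i)

def centralizerOrder {r : ℕ} (s : Fin r → ℕ) : ℕ := ∏ i : Fin r, ((i : ℕ) + 1) ^ s i * (s i)!

section PartsOfCounts

variable {r : ℕ}

def partsOfCounts (s : Fin r → ℕ) : Multiset ℕ := ∑ i, Multiset.replicate (s i) ((i : ℕ) + 1)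

theorem count_partsOfCounts (s : Fin r → ℕ) (k : ℕ) :
    (partsOfCounts s).count k = ∑ i : Fin r, if (i : ℕ) + 1 = k then s i else 0 := by
  simp [partsOfCounts, Multiset.count_sum', Multiset.count_replicate]

theorem count_succ_partsOfCounts (s : Fin r → ℕ) (i : Fin r) :
    (partsOfCounts s).count ((i : ℕ) + 1) = s i := by
  simp [count_partsOfCounts, Fin.val_inj]

theorem mem_partsOfCounts {s : Fin r → ℕ} {k : ℕ} (hk : k ∈ partsOfCounts s) :
    ∃ i : Fin r, (i : ℕ) + 1 = k := by
  simp only [partsOfCounts, Multiset.mem_sum, Multiset.mem_replicate] at hk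
  obtain ⟨i, -, -, rfl⟩ := hk
  exact ⟨i, rfl⟩

theorem sum_partsOfCounts (s : Fin r → ℕ) :
    (partsOfCounts s).sum = ∑ i : Fin r, ((i : ℕ) + 1) * s i := by
  simp [partsOfCounts, Multiset.sum_sum, Multiset.sum_replicate, mul_comm]

theorem partsOfCounts_count {P : Multiset ℕ} (hP : ∀ k ∈ P, 0 < k ∧ k ≤ r) :
    partsOfCounts (fun i : Fin r => P.count ((i : ℕ) + 1)) = P := by
  ext k
  rw [count_partsOfCounts]
  by_cases hk : 0 < k ∧ k ≤ r
  · rw [Finset.sum_eq_single_of_mem ⟨k - 1, by omega⟩ (mem_univ _) fun i _ hi => if_neg ?_]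
    · simp only [Nat.sub_add_cancel hk.1, if_true]
    · exact fun h => hi (Fin.ext (by simp; omega))
  · rw [Multiset.count_eq_zero.2 fun h => hk (hP k h)]
    exact Finset.sum_eq_zero fun i _ => if_neg (by omega)

theorem prod_toFinset_partsOfCounts (s : Fin r → ℕ) :
    ∏ k ∈ (partsOfCounts s).toFinset,
      k ^ (partsOfCounts s).count k * ((partsOfCounts s).count k)! = centralizerOrder s := by
  rw [Finset.prod_subset (s₂ := univ.image fun i : Fin r => (i : ℕ) + 1), Finset.prod_image]
  · simp only [count_succ_partsOfCounts, centralizerOrder]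
  · exact fun i _ j _ h => Fin.ext (by simpa using h)
  · intro k hk
    obtain ⟨i, rfl⟩ := mem_partsOfCounts (Multiset.mem_toFinset.1 hk)
    exact mem_image_of_mem _ (mem_univ i)
  · intro k _ hk
    rw [Multiset.count_eq_zero.2 (mt Multiset.mem_toFinset.2 hk), pow_zero, factorial_zero, mul_one]

end PartsOfCounts

namespace Equiv.Perm

variable {α : Type*} [Fintype α] [DecidableEq α]

theorem partition_parts_eq_iff {σ : Perm α} {P : Multiset ℕ} (hP : ∀ k ∈ P, 0 < k)
    (hsum : P.sum = Fintype.card α) : σ.partition.parts = P ↔ σ.cycleType = P.filter (2 ≤ ·) := by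
  refine ⟨fun h => h ▸ filter_parts_partition_eq_cycleType.symm, fun h => ?_⟩
  refine Multiset.eq_of_filter_two_le_eq (fun _ => σ.partition.parts_pos) hP ?_ ?_
  · rw [σ.partition.parts_sum, hsum]
  · rw [filter_parts_partition_eq_cycleType, h]

theorem card_of_partition_parts_mul_eq {P : Multiset ℕ} (hP : ∀ k ∈ P, 0 < k)
    (hsum : P.sum = Fintype.card α) :
    #{σ : Perm α | σ.partition.parts = P} * ∏ k ∈ P.toFinset, k ^ P.count k * (P.count k)! =
      (Fintype.card α)! := by
  have hP' := Multiset.filter_two_le_add_replicate_count_one hP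
  set m := P.filter (2 ≤ ·)
  have hm : m.sum + P.count 1 = Fintype.card α := by
    rw [← hsum]
    conv_rhs => rw [← hP']
    simp
  have hprod : P.prod = m.prod := by
    rw [← hP', Multiset.prod_add, Multiset.prod_replicate, one_pow, mul_one]
  have key := card_of_cycleType_mul_eq α m
  rw [if_pos ⟨by omega, fun a ha => Multiset.of_mem_filter ha⟩,
    show Fintype.card α - m.sum = P.count 1 by omega] at key
  rw [← key, filter_congr fun σ _ => partition_parts_eq_iff hP hsum, prod_mul_distrib,
    ← Finset.prod_multiset_count, Multiset.prod_factorial_count_eq_factorial_count_one_mul hP,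
    hprod]
  ring

theorem forall_cycleType_le_iff {r : ℕ} (hr : 1 ≤ r) (σ : Perm α) :
    (∀ c ∈ σ.cycleType, c ≤ r) ↔ ∀ k ∈ σ.partition.parts, 0 < k ∧ k ≤ r := by
  simp only [parts_partition, Multiset.mem_add, Multiset.mem_replicate]
  refine ⟨?_, fun h c hc => (h c (Or.inl hc)).2⟩
  rintro h k (hk | ⟨-, rfl⟩)
  · exact ⟨zero_lt_two.trans_le (two_le_of_mem_cycleType hk), h k hk⟩
  · exact ⟨one_pos, hr⟩

theorem card_filter_forall_cycleType_le_eq_sum {r : ℕ} (hr : 1 ≤ r) :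
    #{σ : Perm α | ∀ c ∈ σ.cycleType, c ≤ r} =
      ∑ s ∈ countVectors r (Fintype.card α),
        #{σ : Perm α | σ.partition.parts = partsOfCounts s} := by
  set counts : Perm α → Fin r → ℕ := fun σ i => σ.partition.parts.count ((i : ℕ) + 1)
  have hmaps : ∀ σ ∈ ({σ : Perm α | ∀ c ∈ σ.cycleType, c ≤ r} : Finset _),
      counts σ ∈ countVectors r (Fintype.card α) := by
    intro σ hσ
    rw [mem_filter, forall_cycleType_le_iff hr] at hσ
    rw [mem_countVectors, ← sum_partsOfCounts, partsOfCounts_count hσ.2, σ.partition.parts_sum]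
  rw [card_eq_sum_card_fiberwise hmaps]
  refine sum_congr rfl fun s _ => congrArg card (Finset.ext fun σ => ?_)
  simp only [mem_filter, mem_univ, true_and, forall_cycleType_le_iff hr]
  constructor
  · rintro ⟨hσ, rfl⟩
    exact (partsOfCounts_count hσ).symm
  · intro h
    refine ⟨fun k hk => ?_, funext fun i => by simp only [counts, h, count_succ_partsOfCounts]⟩
    obtain ⟨i, rfl⟩ := mem_partsOfCounts (h ▸ hk)
    exact ⟨i.succ_pos, i.isLt⟩

theorem card_filter_forall_cycleType_le_div_factorial {r : ℕ} (hr : 1 ≤ r) :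
    (#{σ : Perm α | ∀ c ∈ σ.cycleType, c ≤ r} : ℝ) / (Fintype.card α)! =
      ∑ s ∈ countVectors r (Fintype.card α), (centralizerOrder s : ℝ)⁻¹ := by
  rw [card_filter_forall_cycleType_le_eq_sum hr, Nat.cast_sum, sum_div]
  refine sum_congr rfl fun s hs => ?_
  have hP : ∀ k ∈ partsOfCounts s, 0 < k := fun k hk => by
    obtain ⟨i, rfl⟩ := mem_partsOfCounts hk
    exact i.succ_pos
  have key := card_of_partition_parts_mul_eq hP
    ((sum_partsOfCounts s).trans (mem_countVectors.1 hs))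
  rw [prod_toFinset_partsOfCounts] at key
  have hcard : (#{σ : Perm α | σ.partition.parts = partsOfCounts s} : ℝ) ≠ 0 :=
    Nat.cast_ne_zero.2 (left_ne_zero_of_mul (key ▸ factorial_ne_zero _))
  rw [← key, Nat.cast_mul, div_mul_cancel_left₀ hcard]

end Equiv.Perm

theorem ProbabilityTheory.iIndepFun.measureReal_mem_finset {Ω ι : Type*} [Fintype ι]
    [MeasurableSpace Ω] {μ : Measure Ω} {Z : ι → Ω → ℕ}
    (hmeas : ∀ i, Measurable (Z i)) (hindep : iIndepFun Z μ) (S : Finset (ι → ℕ)) :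
    μ.real {ω | (fun i => Z i ω) ∈ S} = ∑ s ∈ S, ∏ i, (μ.map (Z i)).real {s i} := by
  have := hindep.isProbabilityMeasure
  have hX : Measurable fun ω i => Z i ω := measurable_pi_lambda _ hmeas
  calc μ.real {ω | (fun i => Z i ω) ∈ S}
      = (μ.map fun ω i => Z i ω).real S := (map_measureReal_apply hX S.measurableSet).symm
    _ = ∑ s ∈ S, (Measure.pi fun i => μ.map (Z i)).real {s} := by
      rw [hindep.map_fun_eq_pi_map fun i => (hmeas i).aemeasurable, sum_measureReal_singleton]
    _ = ∑ s ∈ S, ∏ i, (μ.map (Z i)).real {s i} := by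
      refine sum_congr rfl fun s _ => ?_
      rw [← Set.univ_pi_singleton, measureReal_def, Measure.pi_pi, ENNReal.toReal_prod]
      rfl

theorem poissonMeasure_inv_succ_real_singleton (k m : ℕ) :
    (poissonMeasure ((k + 1 : ℝ≥0)⁻¹)).real {m} =
      Real.exp (-(1 / ((k : ℝ) + 1))) * (((k + 1) ^ m * m ! : ℕ) : ℝ)⁻¹ := by
  rw [poissonMeasure_real_singleton]
  push_cast
  rw [one_div, inv_pow, mul_inv, div_eq_mul_inv, mul_assoc]

theorem prod_poissonMeasure_real_singleton {r : ℕ} (s : Fin r → ℕ) :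
    ∏ i : Fin r, (poissonMeasure (((i : ℕ) + 1 : ℝ≥0)⁻¹)).real {s i} =
      Real.exp (-∑ i : Fin r, (1 : ℝ) / ((i : ℕ) + 1)) * (centralizerOrder s : ℝ)⁻¹ := by
  simp_rw [poissonMeasure_inv_succ_real_singleton, prod_mul_distrib, ← Real.exp_sum,
    sum_neg_distrib, centralizerOrder, Nat.cast_prod, prod_inv_distrib]

theorem stmt_11_general (n r : ℕ) (hr : 1 ≤ r)
    {Ω : Type*} [MeasurableSpace Ω] (μ : Measure Ω)
    (Z : Fin r → Ω → ℕ)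
    (hmeas : ∀ i, Measurable (Z i))
    (hindep : iIndepFun Z μ)
    (hdist : ∀ i : Fin r, μ.map (Z i) = poissonMeasure (((i : ℕ) + 1 : ℝ≥0)⁻¹)) :
    ((Finset.filter (fun σ : Equiv.Perm (Fin n) => ∀ c ∈ σ.cycleType, c ≤ r)
        Finset.univ).card : ℝ) / (Nat.factorial n : ℝ) =
      Real.exp (∑ i : Fin r, (1 : ℝ) / ((i : ℕ) + 1)) *
        (μ {ω | ∑ i : Fin r, ((i : ℕ) + 1) * Z i ω = n}).toReal := by
  have hcount := Equiv.Perm.card_filter_forall_cycleType_le_div_factorial (α := Fin n) hr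
  rw [Fintype.card_fin] at hcount
  have hevent : {ω | ∑ i : Fin r, ((i : ℕ) + 1) * Z i ω = n} =
      {ω | (fun i => Z i ω) ∈ countVectors r n} := by
    simp only [mem_countVectors]
  rw [hevent, ← measureReal_def, hindep.measureReal_mem_finset hmeas]
  simp_rw [hdist, prod_poissonMeasure_real_singleton, ← mul_sum, ← mul_assoc, ← Real.exp_add,
    add_neg_cancel, Real.exp_zero, one_mul]
  exact hcount

theorem stmt_11 (n r : ℕ) (hr : 1 ≤ r) (hrn : r ≤ n)
    {Ω : Type*} [MeasurableSpace Ω] (μ : Measure Ω) [IsProbabilityMeasure μ]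
    (Z : Fin r → Ω → ℕ)
    (hmeas : ∀ i, Measurable (Z i))
    (hindep : iIndepFun Z μ)
    (hdist : ∀ i : Fin r, μ.map (Z i) = poissonMeasure (((i : ℕ) + 1 : ℝ≥0)⁻¹)) :
    ((Finset.filter (fun σ : Equiv.Perm (Fin n) => ∀ c ∈ σ.cycleType, c ≤ r)
        Finset.univ).card : ℝ) / (Nat.factorial n : ℝ) =
      Real.exp (∑ i : Fin r, (1 : ℝ) / ((i : ℕ) + 1)) *
        (μ {ω | ∑ i : Fin r, ((i : ℕ) + 1) * Z i ω = n}).toReal :=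
  stmt_11_general n r hr μ Z hmeas hindep hdist
end

section
/- For every u ≥ 0, the Dickman function satisfies ρ(u) ≤ 1/Γ(u+1). -/
/-!
The delay equation integrates to `u ρ(u) = ∫_{u-1}^u ρ`. This identity forces `ρ > 0`
(look at the first nonpositive value), hence `ρ' ≤ 0`, so `ρ` is nonincreasing and
`u ρ(u) ≤ ρ(u - 1)`. As `Γ(u + 1) = u Γ(u)`, the bound at `u - 1` then gives the bound at `u`,
which reduces everything to `u ∈ [0, 1]`; there it reads `Γ(u + 1) ≤ 1`, true by convexity of `Γ`
and `Γ(1) = Γ(2) = 1`.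
-/

open Set MeasureTheory

lemma hasDerivAt_integral_sub_one {f : ℝ → ℝ} (hf : Continuous f) (x : ℝ) :
    HasDerivAt (fun y => ∫ t in (y - 1)..y, f t) (f x - f (x - 1)) x := by
  have hF := intervalIntegral.integral_hasFDerivAt (hf.intervalIntegrable (x - 1) x)
    (hf.stronglyMeasurableAtFilter _ _) (hf.stronglyMeasurableAtFilter _ _)
    hf.continuousAt hf.continuousAt
  have hp : HasDerivAt (fun y : ℝ => (y - 1, y)) (1, 1) x :=
    ((hasDerivAt_id x).sub_const 1).prodMk (hasDerivAt_id x)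
  exact (hF.comp_hasDerivAt (f := fun y : ℝ => (y - 1, y)) x hp).congr_deriv (by simp)

lemma Real.Gamma_add_one_le_one {u : ℝ} (h0 : 0 ≤ u) (h1 : u ≤ 1) :
    Real.Gamma (u + 1) ≤ 1 := by
  have h := Real.convexOn_Gamma.2 (mem_Ioi.2 one_pos) (mem_Ioi.2 two_pos)
    (sub_nonneg.2 h1) h0 (sub_add_cancel 1 u)
  simp only [smul_eq_mul, Real.Gamma_one, Real.Gamma_two] at h
  calc Real.Gamma (u + 1) = Real.Gamma ((1 - u) * 1 + u * 2) := by ring_nf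
    _ ≤ 1 := by linarith

lemma nonneg_induction_on_sub_one {P : ℝ → Prop} (base : ∀ u ∈ Icc (0 : ℝ) 1, P u)
    (step : ∀ u, 1 < u → P (u - 1) → P u) : ∀ u, 0 ≤ u → P u := by
  intro u hu
  obtain ⟨n, hn⟩ := exists_nat_ge u
  induction n generalizing u with
  | zero => exact base u ⟨hu, by push_cast at hn; linarith⟩
  | succ n ih =>
    rcases le_or_gt u 1 with h1 | h1
    · exact base u ⟨hu, h1⟩
    · exact step u h1 (ih (u - 1) (by linarith) (by push_cast at hn; linarith))

structure IsDickmanFunction (ρ : ℝ → ℝ) : Prop where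
  continuousOn : ContinuousOn ρ (Ici 0)
  eq_one : ∀ u, 0 ≤ u → u ≤ 1 → ρ u = 1
  hasDerivAt : ∀ u, 1 < u → HasDerivAt ρ (-(ρ (u - 1)) / u) u

namespace IsDickmanFunction

variable {ρ : ℝ → ℝ}

lemma intervalIntegrable (h : IsDickmanFunction ρ) {a b : ℝ} (ha : 0 ≤ a) (hb : 0 ≤ b) :
    IntervalIntegrable ρ volume a b :=
  (h.continuousOn.mono fun _ hx => le_trans (le_inf ha hb) hx.1).intervalIntegrable

lemma mul_eq_integral (h : IsDickmanFunction ρ) {u : ℝ} (hu : 1 ≤ u) :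
    u * ρ u = ∫ t in (u - 1)..u, ρ t := by
  -- ρ extended by ρ 0 to the left, so that the sliding integral is differentiable everywhere
  set ρ₀ : ℝ → ℝ := fun t => ρ (max t 0)
  have hρ₀ : Continuous ρ₀ :=
    h.continuousOn.comp_continuous (continuous_id.max continuous_const) fun t => le_max_right t 0
  have hρ₀_eq : ∀ t, 0 ≤ t → ρ₀ t = ρ t := fun t ht => by
    simp only [ρ₀, max_eq_left ht]
  set G : ℝ → ℝ := fun x => x * ρ x - ∫ t in (x - 1)..x, ρ₀ t
  have hG_one : G 1 = 0 := by
    have : ∫ t in (0 : ℝ)..1, ρ₀ t = ∫ t in (0 : ℝ)..1, (1 : ℝ) :=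
      intervalIntegral.integral_congr fun t ht => by
        rw [uIcc_of_le zero_le_one] at ht
        rw [hρ₀_eq t ht.1, h.eq_one t ht.1 ht.2]
    simp [G, this, h.eq_one 1 zero_le_one le_rfl]
  have hG_deriv : ∀ x, 1 < x → HasDerivAt G 0 x := fun x hx => by
    have hd : HasDerivAt G (1 * ρ x + x * (-(ρ (x - 1)) / x) - (ρ₀ x - ρ₀ (x - 1))) x :=
      ((hasDerivAt_id' x).mul (h.hasDerivAt x hx)).sub (hasDerivAt_integral_sub_one hρ₀ x)
    rw [hρ₀_eq x (by linarith), hρ₀_eq (x - 1) (by linarith)] at hd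
    convert hd using 1
    field_simp
    ring
  have hG_cont : ContinuousOn G (Icc 1 u) :=
    (continuousOn_id.mul (h.continuousOn.mono fun x hx => zero_le_one.trans hx.1)).sub
      (fun x _ => (hasDerivAt_integral_sub_one hρ₀ x).continuousAt.continuousWithinAt)
  have hG_u : G u = 0 := by
    rcases hu.eq_or_lt with rfl | hu
    · exact hG_one
    obtain ⟨c, hc, hslope⟩ := exists_hasDerivAt_eq_slope G (fun _ => 0) hu hG_cont
      fun x hx => hG_deriv x hx.1
    rw [eq_div_iff (sub_pos.2 hu).ne', zero_mul, hG_one] at hslope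
    linarith
  have hρ₀_integral : ∫ t in (u - 1)..u, ρ₀ t = ∫ t in (u - 1)..u, ρ t :=
    intervalIntegral.integral_congr fun t ht => by
      rw [uIcc_of_le (by linarith)] at ht
      exact hρ₀_eq t (by linarith [ht.1])
  linarith [hG_u]

-- At the first nonpositive value `ρ s`, the right side of `s ρ(s) = ∫_{s-1}^s ρ` is positive.
lemma pos (h : IsDickmanFunction ρ) {u : ℝ} (hu : 0 ≤ u) : 0 < ρ u := by
  by_contra! hu_nonpos
  set S := Ici 0 ∩ ρ ⁻¹' Iic 0
  have hS_bdd : BddBelow S := ⟨0, fun _ hx => hx.1⟩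
  have hs : sInf S ∈ S :=
    (h.continuousOn.preimage_isClosed_of_isClosed isClosed_Ici isClosed_Iic).csInf_mem
      ⟨u, hu, hu_nonpos⟩ hS_bdd
  set s := sInf S
  have hρs : ρ s ≤ 0 := hs.2
  have hs_one : 1 < s := by
    by_contra! hs_le
    linarith [h.eq_one s hs.1 hs_le]
  have hpos_before : ∀ t ∈ Ioo (s - 1) s, 0 < ρ t := fun t ht => by
    by_contra! ht_nonpos
    exact ht.2.not_ge (csInf_le hS_bdd ⟨mem_Ici.2 (by linarith [ht.1]), ht_nonpos⟩)
  have hint : 0 < ∫ t in (s - 1)..s, ρ t :=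
    intervalIntegral.intervalIntegral_pos_of_pos_on
      (h.intervalIntegrable (by linarith) (by linarith)) hpos_before (by linarith)
  nlinarith [h.mul_eq_integral hs_one.le]

lemma antitoneOn (h : IsDickmanFunction ρ) : AntitoneOn ρ (Ici 0) := by
  have h_Icc : AntitoneOn ρ (Icc 0 1) := fun x hx y hy _ => by
    rw [h.eq_one x hx.1 hx.2, h.eq_one y hy.1 hy.2]
  have h_Ici : AntitoneOn ρ (Ici 1) := by
    refine antitoneOn_of_hasDerivWithinAt_nonpos (f' := fun x => -(ρ (x - 1)) / x) (convex_Ici 1)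
      (h.continuousOn.mono fun _ hx => zero_le_one.trans hx.out) (fun x hx => ?_) (fun x hx => ?_)
    · rw [interior_Ici] at hx
      exact (h.hasDerivAt x hx).hasDerivWithinAt
    · rw [interior_Ici, mem_Ioi] at hx
      have hρ_pos : 0 < ρ (x - 1) := h.pos (by linarith)
      exact div_nonpos_of_nonpos_of_nonneg (neg_nonpos.2 hρ_pos.le) (by linarith)
  rw [← Icc_union_Ici_eq_Ici zero_le_one]
  exact h_Icc.union_right h_Ici (isGreatest_Icc zero_le_one) isLeast_Ici

lemma mul_le_sub_one (h : IsDickmanFunction ρ) {u : ℝ} (hu : 1 ≤ u) :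
    u * ρ u ≤ ρ (u - 1) := by
  rw [h.mul_eq_integral hu]
  calc ∫ t in (u - 1)..u, ρ t ≤ ∫ _ in (u - 1)..u, ρ (u - 1) := by
        refine intervalIntegral.integral_mono_on (by linarith)
          (h.intervalIntegrable (by linarith) (by linarith)) intervalIntegrable_const
          fun t ht => h.antitoneOn (show (0 : ℝ) ≤ u - 1 by linarith)
            (show (0 : ℝ) ≤ t by linarith [ht.1]) ht.1
    _ = ρ (u - 1) := by simp

end IsDickmanFunction

theorem stmt_14 (ρ : ℝ → ℝ)
    (hcont : ContinuousOn ρ (Set.Ici (0 : ℝ)))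
    (hinit : ∀ u : ℝ, 0 ≤ u → u ≤ 1 → ρ u = 1)
    (hde : ∀ u : ℝ, 1 < u → HasDerivAt ρ (-(ρ (u - 1)) / u) u) :
    ∀ u : ℝ, 0 ≤ u → ρ u ≤ 1 / Real.Gamma (u + 1) := by
  have hρ : IsDickmanFunction ρ := ⟨hcont, hinit, hde⟩
  refine nonneg_induction_on_sub_one (fun u hu => ?_) (fun u hu ih => ?_)
  · rw [hinit u hu.1 hu.2, le_div_iff₀ (Real.Gamma_pos_of_pos (by linarith [hu.1])), one_mul]
    exact Real.Gamma_add_one_le_one hu.1 hu.2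
  · have hu0 : 0 < u := by linarith
    have hΓ : 0 < Real.Gamma u := Real.Gamma_pos_of_pos hu0
    rw [sub_add_cancel, le_div_iff₀ hΓ] at ih
    rw [Real.Gamma_add_one hu0.ne', le_div_iff₀ (by positivity)]
    calc ρ u * (u * Real.Gamma u) = u * ρ u * Real.Gamma u := by ring
      _ ≤ ρ (u - 1) * Real.Gamma u := by gcongr; exact hρ.mul_le_sub_one hu.le
      _ ≤ 1 := ih
end

section
/- Let Φ(u) ∈ ℂ[[u]] be a formal power series with constant term 1, and let f(z) be the unique formal power series with f(0)=0 solving f(z) = z·Φ(f(z)). Then for every N ≥ 1, the N-th coefficient of f is (1/N)·[u^{N−1}] Φ(u)^N. -/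
/-!
Write the functional equation as `f = X · Φ(f)`, so that `f ^ k = X ^ k · Φ ^ k (f)` and
`[z^(k+m)] f ^ k = ∑_{j+i=m} [u^j] Φ ^ k · [z^m] f ^ j`. Strong induction on `m` in the
identity `(k + m) [z^(k+m)] f ^ k = k [u^m] Φ ^ (k + m)` turns `m [z^(k+m)] f ^ k` into
`[u^m] u (Φ ^ k)' Φ ^ m`, and `(k + m) (Φ ^ k)' Φ ^ m = k (Φ ^ (k + m))'` closes the induction.
The theorem is the case `k = 1`.
-/

open PowerSeries Finset

namespace PowerSeries

variable {R : Type*} [CommRing R]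

theorem coeff_pow_eq_zero_of_lt {f : R⟦X⟧} (hf : constantCoeff f = 0) {n d : ℕ} (h : n < d) :
    coeff n (f ^ d) = 0 :=
  coeff_of_lt_order n <| (Nat.cast_lt.mpr h).trans_le (le_order_pow_of_constantCoeff_eq_zero d hf)

theorem coeff_subst_eq_sum_range {f : R⟦X⟧} (hf : constantCoeff f = 0) (Φ : R⟦X⟧) (n : ℕ) :
    coeff n (Φ.subst f) = ∑ d ∈ range (n + 1), coeff d Φ * coeff n (f ^ d) := by
  rw [coeff_subst' (HasSubst.of_constantCoeff_zero' hf)]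
  refine finsum_eq_sum_of_support_subset _ fun d hd => ?_
  by_contra hdn
  simp only [coe_range, Set.mem_Iio, not_lt] at hdn
  exact hd (by simp [coeff_pow_eq_zero_of_lt hf (Nat.lt_of_succ_le hdn)])

theorem coeff_X_mul_derivative (A : R⟦X⟧) (j : ℕ) : coeff j (X * d⁄dX R A) = j * coeff j A := by
  cases j with
  | zero => simp
  | succ j => rw [coeff_succ_X_mul, coeff_derivative, mul_comm]; push_cast; ring

theorem add_nsmul_derivative_pow_mul_pow (Φ : R⟦X⟧) (k m : ℕ) :
    (k + m) • (d⁄dX R (Φ ^ k) * Φ ^ m) = k • d⁄dX R (Φ ^ (k + m)) := by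
  cases k with
  | zero => simp
  | succ k =>
    rw [Derivation.leibniz_pow, Derivation.leibniz_pow, smul_eq_mul, smul_eq_mul,
      Nat.add_sub_cancel, show k + 1 + m - 1 = k + m by omega, smul_mul_assoc, smul_comm,
      mul_right_comm, ← pow_add]

variable {Φ f : R⟦X⟧}

theorem constantCoeff_eq_zero_of_eq_X_mul (hfe : f = X * Φ.subst f) : constantCoeff f = 0 := by
  rw [hfe]; simp

theorem coeff_add_pow_of_eq_X_mul_subst (hfe : f = X * Φ.subst f) (k m : ℕ) :
    coeff (k + m) (f ^ k) = ∑ p ∈ antidiagonal m, coeff p.1 (Φ ^ k) * coeff m (f ^ p.1) := by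
  have hf := constantCoeff_eq_zero_of_eq_X_mul hfe
  rw [hfe, mul_pow, ← subst_pow (HasSubst.of_constantCoeff_zero' hf), ← hfe, coeff_X_pow_mul',
    if_pos (Nat.le_add_right k m), Nat.add_sub_cancel_left, coeff_subst_eq_sum_range hf,
    Nat.sum_antidiagonal_eq_sum_range_succ_mk]

theorem natCast_mul_coeff_add_pow_of_eq_X_mul_subst [IsAddTorsionFree R]
    (hfe : f = X * Φ.subst f) (k m : ℕ) :
    ((k + m : ℕ) : R) * coeff (k + m) (f ^ k) = k * coeff m (Φ ^ (k + m)) := by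
  induction m using Nat.strong_induction_on generalizing k with
  | _ m ih =>
  rcases Nat.eq_zero_or_pos m with rfl | hm
  · simpa using congrArg ((k : R) * ·) (coeff_add_pow_of_eq_X_mul_subst hfe k 0)
  have hsum : (m : R) * coeff (k + m) (f ^ k) = coeff m (X * d⁄dX R (Φ ^ k) * Φ ^ m) := by
    rw [coeff_add_pow_of_eq_X_mul_subst hfe, mul_sum, coeff_mul]
    refine sum_congr rfl fun ⟨j, i⟩ hji => ?_
    rw [HasAntidiagonal.mem_antidiagonal] at hji
    subst hji
    rw [coeff_X_mul_derivative]
    rcases Nat.eq_zero_or_pos j with rfl | hj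
    · have hi : i ≠ 0 := by simpa using hm.ne'
      simp [coeff_one, hi]
    · have := ih i (by omega) j
      push_cast at this ⊢
      linear_combination coeff j (Φ ^ k) * this
  have hscaled : m • ((k + m : ℕ) * coeff (k + m) (f ^ k) : R) =
      m • (k * coeff m (Φ ^ (k + m))) := by
    simp only [nsmul_eq_mul]
    calc (m : R) * ((k + m : ℕ) * coeff (k + m) (f ^ k))
        = (k + m : ℕ) * (m * coeff (k + m) (f ^ k)) := by ring
      _ = coeff m (X * ((k + m) • (d⁄dX R (Φ ^ k) * Φ ^ m))) := by
        rw [hsum, mul_smul_comm, map_nsmul, nsmul_eq_mul, mul_assoc]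
      _ = coeff m (X * (k • d⁄dX R (Φ ^ (k + m)))) := by
        rw [add_nsmul_derivative_pow_mul_pow]
      _ = m * (k * coeff m (Φ ^ (k + m))) := by
        rw [mul_smul_comm, map_nsmul, coeff_X_mul_derivative, nsmul_eq_mul]; ring
  exact (nsmul_right_inj hm.ne').mp hscaled

end PowerSeries

theorem stmt_15_general (Φ f : PowerSeries ℂ)
    (hf0 : PowerSeries.coeff 0 f = 0)
    (hfe : ∀ n : ℕ, PowerSeries.coeff (n + 1) f =
      ∑ k ∈ Finset.range (n + 1), PowerSeries.coeff k Φ * PowerSeries.coeff n (f ^ k)) :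
    ∀ N : ℕ, 1 ≤ N →
      PowerSeries.coeff N f = (1 / (N : ℂ)) * PowerSeries.coeff (N - 1) (Φ ^ N) := by
  intro N hN
  have hf : constantCoeff f = 0 := by rwa [← coeff_zero_eq_constantCoeff_apply]
  have hfX : f = X * Φ.subst f := by
    ext n
    cases n with
    | zero => simp [hf0]
    | succ n => rw [coeff_succ_X_mul, coeff_subst_eq_sum_range hf, hfe]
  obtain ⟨m, rfl⟩ : ∃ m, N = 1 + m := ⟨N - 1, by omega⟩
  have h := natCast_mul_coeff_add_pow_of_eq_X_mul_subst hfX 1 m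
  rw [pow_one, Nat.cast_one, one_mul] at h
  rw [Nat.add_sub_cancel_left, ← h, one_div,
    inv_mul_cancel_left₀ (Nat.cast_ne_zero.mpr (by omega))]

/-- Lagrange–Bürmann inversion: if `Φ ∈ ℂ[[u]]` has constant term `1` and `f` is the unique
formal power series with zero constant term satisfying `f(z) = z·Φ(f(z))` (encoded
coefficientwise: the `(n+1)`-st coefficient of `f` is the `n`-th coefficient of `Φ(f)`,
where `coeff n (Φ(f)) = ∑_{k ≤ n} Φ_k · coeff n (f^k)` since `f` has zero constant term),
then `[z^N] f = (1/N)·[u^{N-1}] Φ^N` for all `N ≥ 1`. -/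
theorem stmt_15 (Φ f : PowerSeries ℂ)
    (hΦ : PowerSeries.constantCoeff Φ = 1)
    (hf0 : PowerSeries.coeff 0 f = 0)
    (hfe : ∀ n : ℕ, PowerSeries.coeff (n + 1) f =
      ∑ k ∈ Finset.range (n + 1), PowerSeries.coeff k Φ * PowerSeries.coeff n (f ^ k)) :
    ∀ N : ℕ, 1 ≤ N →
      PowerSeries.coeff N f = (1 / (N : ℂ)) * PowerSeries.coeff (N - 1) (Φ ^ N) :=
  stmt_15_general Φ f hf0 hfe
end
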